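/- Let T be a Wang set and let G be its underlying directed multigraph (vertices are the horizontal colors occurring as west or east color of a tile of T, and each tile t gives one edge from w(t) to e(t)). If G contains a strongly connected component whose set of edges forms a single directed cycle (every vertex of the component has exactly one outgoing edge inside the component, and these edges form one cycle through all vertices of the component), then T is not minimally aperiodic. -/

import Mathlib

structure WangTile (H V : Type*) where
  west : H
  east : H
  south : V
  north : V
deriving DecidableEq

def TilingOn {H V : Type*} (T : Set (WangTile H V)) (X : Set (ℤ × ℤ))
    (f : ℤ × ℤ → WangTile H V) : Prop :=
  (∀ p ∈ X, f p ∈ T) ∧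
  (∀ x y : ℤ, (x, y) ∈ X → (x + 1, y) ∈ X →
    (f (x, y)).east = (f (x + 1, y)).west) ∧
  (∀ x y : ℤ, (x, y) ∈ X → (x, y + 1) ∈ X →
    (f (x, y)).north = (f (x, y + 1)).south)

def Tiling {H V : Type*} (T : Set (WangTile H V)) (f : ℤ × ℤ → WangTile H V) : Prop :=
  TilingOn T Set.univ f

def TilesPlane {H V : Type*} (T : Set (WangTile H V)) : Prop :=
  ∃ f, Tiling T f

def PeriodicTiling {H V : Type*} (f : ℤ × ℤ → WangTile H V) : Prop :=
  ∃ u v : ℤ, (u, v) ≠ (0, 0) ∧ ∀ x y : ℤ, f (x + u, y + v) = f (x, y)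

def Aperiodic {H V : Type*} (T : Set (WangTile H V)) : Prop :=
  TilesPlane T ∧ ∀ f, Tiling T f → ¬ PeriodicTiling f

def MinimallyAperiodic {H V : Type*} (T : Set (WangTile H V)) : Prop :=
  Aperiodic T ∧ ∀ S : Set (WangTile H V), S ⊂ T → ¬ TilesPlane S

/-- One horizontal step in the underlying graph of a Wang set: there is a tile of `T`
with west color `c` and east color `c'`. -/
def HStep {H V : Type*} (T : Set (WangTile H V)) (c c' : H) : Prop :=
  ∃ t ∈ T, t.west = c ∧ t.east = c'

/-!
If `T` were minimally aperiodic, the tiles with west colour in `C` could not be omitted, so by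
compactness every tiling contains such tiles above any given height. Since `C` is a strongly
connected component, the west colours lying in `C` form an interval of every row; hence in a
limit of horizontal shifts of a tiling, every row meeting `C` lies entirely in `C`. Such a row
follows the cycle `next` and is determined by one of its colours, so two of them agree up to a
horizontal shift `s`, and repeating the strip between them, shifted by `s` each time, gives a
periodic tiling.
-/

open Filter Set

lemma Ultrafilter.exists_eventually_eq {ι α : Type*} (U : Ultrafilter ι) {s : Set α}
    (hs : s.Finite) {F : ι → α} (hF : ∀ j, F j ∈ s) : ∃ a, ∀ᶠ j in U, F j = a := by
  have hcover : (⋃ a ∈ s, {j | F j = a}) ∈ U :=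
    univ_mem' fun j => mem_biUnion (hF j) rfl
  obtain ⟨a, -, ha⟩ := (Ultrafilter.finite_biUnion_mem_iff hs).1 hcover
  exact ⟨a, ha⟩

lemma Set.Finite.injOn_of_exists_iterate_eq {α : Type*} {s : Set α} {f : α → α}
    (hs : s.Finite) (hf : MapsTo f s s) (hcycle : ∀ a ∈ s, ∀ b ∈ s, ∃ m : ℕ, f^[m] a = b) :
    InjOn f s := by
  refine ((hs.surjOn_iff_bijOn_of_mapsTo hf).1 fun b hb => ?_).injOn
  obtain ⟨m, hm⟩ := hcycle (f b) (hf hb) b hb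
  rw [← Function.iterate_succ_apply, Function.iterate_succ_apply'] at hm
  exact ⟨_, hf.iterate m hb, hm⟩

lemma Int.iterate_of_forall_succ {α : Type*} {f : α → α} {a : ℤ → α}
    (ha : ∀ z, a (z + 1) = f (a z)) (z : ℤ) (m : ℕ) : a (z + m) = f^[m] (a z) := by
  induction m with
  | zero => simp
  | succ m ih => rw [Nat.cast_succ, ← add_assoc, ha, ih, Function.iterate_succ_apply']

lemma Int.eq_of_forall_succ_of_injOn {α : Type*} {f : α → α} {s : Set α} (hf : InjOn f s)
    {a b : ℤ → α} (ha : ∀ z, a (z + 1) = f (a z)) (hb : ∀ z, b (z + 1) = f (b z))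
    (has : ∀ z, a z ∈ s) (hbs : ∀ z, b z ∈ s) (h₀ : a 0 = b 0) : a = b := by
  funext z
  induction z using Int.induction_on with
  | zero => exact h₀
  | succ i ih => rw [ha, hb, ih]
  | pred i ih =>
    refine hf (has _) (hbs _) ?_
    rw [← ha, ← hb, sub_add_cancel, ih]

namespace Tiling

variable {H V : Type*} {T : Set (WangTile H V)} {f : ℤ × ℤ → WangTile H V}

lemma mem (hf : Tiling T f) (p : ℤ × ℤ) : f p ∈ T := hf.1 p trivial

lemma east_eq (hf : Tiling T f) (x y : ℤ) : (f (x, y)).east = (f (x + 1, y)).west :=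
  hf.2.1 x y trivial trivial

lemma north_eq (hf : Tiling T f) (x y : ℤ) : (f (x, y)).north = (f (x, y + 1)).south :=
  hf.2.2 x y trivial trivial

lemma of_forall (hmem : ∀ p, f p ∈ T)
    (heast : ∀ x y, (f (x, y)).east = (f (x + 1, y)).west)
    (hnorth : ∀ x y, (f (x, y)).north = (f (x, y + 1)).south) : Tiling T f :=
  ⟨fun p _ => hmem p, fun x y _ _ => heast x y, fun x y _ _ => hnorth x y⟩

lemma comp_add_const (hf : Tiling T f) (v : ℤ × ℤ) : Tiling T (fun p => f (p + v)) := by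
  refine of_forall (fun p => hf.mem _) (fun x y => ?_) (fun x y => ?_)
  · simpa [Prod.add_def, add_right_comm] using hf.east_eq (x + v.1) (y + v.2)
  · simpa [Prod.add_def, add_right_comm] using hf.north_eq (x + v.1) (y + v.2)

lemma exists_mem_of_not_tilesPlane (hf : Tiling T f) {S : Set (WangTile H V)}
    (hS : ¬ TilesPlane (T \ S)) : ∃ p, f p ∈ S := by
  by_contra! h
  exact hS ⟨f, of_forall (fun p => ⟨hf.mem p, h p⟩) hf.east_eq hf.north_eq⟩

lemma exists_ultrafilter_limit (hT : T.Finite) (hf : Tiling T f) {ι : Type*}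
    (U : Ultrafilter ι) (v : ι → ℤ × ℤ) :
    ∃ g, Tiling T g ∧ ∀ p, ∀ᶠ j in U, f (p + v j) = g p := by
  choose g hg using fun p => U.exists_eventually_eq hT fun j => hf.mem (p + v j)
  refine ⟨g, of_forall (fun p => ?_) (fun x y => ?_) (fun x y => ?_), hg⟩
  · obtain ⟨j, hj⟩ := (hg p).exists
    exact hj ▸ hf.mem _
  · obtain ⟨j, h₁, h₂⟩ := ((hg (x, y)).and (hg (x + 1, y))).exists
    rw [← h₁, ← h₂]
    exact (hf.comp_add_const (v j)).east_eq x y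
  · obtain ⟨j, h₁, h₂⟩ := ((hg (x, y)).and (hg (x, y + 1))).exists
    rw [← h₁, ← h₂]
    exact (hf.comp_add_const (v j)).north_eq x y

lemma exists_mem_above (hT : T.Finite) (hf : Tiling T f) {S : Set (WangTile H V)}
    (hS : ¬ TilesPlane (T \ S)) (y₀ : ℤ) : ∃ p, y₀ < p.2 ∧ f p ∈ S := by
  obtain ⟨g, hg, hlim⟩ :=
    hf.exists_ultrafilter_limit hT (Ultrafilter.of (atTop : Filter ℤ)) fun j => (0, j)
  obtain ⟨p, hp⟩ := hg.exists_mem_of_not_tilesPlane hS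
  obtain ⟨j, hj, hjy⟩ := ((hlim p).and
    ((eventually_gt_atTop (y₀ - p.2)).filter_mono (Ultrafilter.of_le _))).exists
  exact ⟨p + (0, j), by simp; omega, hj ▸ hp⟩

lemma exists_periodicTiling (hf : Tiling T f) {p s : ℤ} (hp : 0 < p)
    (hs : ∀ x, f (x + s, p) = f (x, 0)) : ∃ F, Tiling T F ∧ PeriodicTiling F := by
  set F : ℤ × ℤ → WangTile H V := fun q => f (q.1 - q.2 / p * s, q.2 % p)
  have hup : ∀ x y, F (x, y + 1) = f (x - y / p * s, y % p + 1) := by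
    intro x y
    have h₀ := Int.emod_nonneg y hp.ne'
    have hy := Int.mul_ediv_add_emod y p
    rcases (Int.add_one_le_of_lt (Int.emod_lt_of_pos y hp)).lt_or_eq with h | h
    · obtain ⟨hq, hr⟩ := (Int.ediv_emod_unique (a := y + 1) (q := y / p) hp).2
        ⟨by linarith, by omega, h⟩
      simp only [F, hq, hr]
    · -- the strip wraps around: the row above it is the row `p` of `f`, shifted by `s`
      obtain ⟨hq, hr⟩ := (Int.ediv_emod_unique (a := y + 1) (q := y / p + 1) (r := 0) hp).2
        ⟨by linarith [mul_add p (y / p) 1], le_rfl, hp⟩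
      simp only [F, hq, hr, h, ← hs]
      ring_nf
  refine ⟨F, of_forall (fun q => hf.mem _) (fun x y => ?_) (fun x y => ?_), s, p, ?_, ?_⟩
  · simpa [F, sub_add_eq_add_sub] using hf.east_eq (x - y / p * s) (y % p)
  · rw [hup]; exact hf.north_eq _ _
  · simp [hp.ne']
  · intro x y
    obtain ⟨hq, hr⟩ := (Int.ediv_emod_unique (a := y + p) (q := y / p + 1) (r := y % p) hp).2
      ⟨by linarith [Int.mul_ediv_add_emod y p], Int.emod_nonneg y hp.ne', Int.emod_lt_of_pos y hp⟩
    simp only [F, hq, hr]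
    ring_nf

variable {C : Set H}

lemma reflTransGen_west (hf : Tiling T f) (y : ℤ) {u v : ℤ} (huv : u ≤ v) :
    Relation.ReflTransGen (HStep T) (f (u, y)).west (f (v, y)).west := by
  induction v, huv using Int.leInduction with
  | base => exact .refl
  | succ v _ ih => exact ih.tail ⟨f (v, y), hf.mem _, rfl, hf.east_eq v y⟩

lemma west_mem_of_le_of_le (hf : Tiling T f)
    (hconvex : ∀ u ∈ C, ∀ w, ∀ v ∈ C, Relation.ReflTransGen (HStep T) u w →
      Relation.ReflTransGen (HStep T) w v → w ∈ C)
    {y x₁ x x₂ : ℤ} (h₁ : x₁ ≤ x) (h₂ : x ≤ x₂) (hx₁ : (f (x₁, y)).west ∈ C)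
    (hx₂ : (f (x₂, y)).west ∈ C) : (f (x, y)).west ∈ C :=
  hconvex _ hx₁ _ _ hx₂ (hf.reflTransGen_west y h₁) (hf.reflTransGen_west y h₂)

lemma exists_limit_west_mem_row (hT : T.Finite) (hf : Tiling T f)
    (hconvex : ∀ u ∈ C, ∀ w, ∀ v ∈ C, Relation.ReflTransGen (HStep T) u w →
      Relation.ReflTransGen (HStep T) w v → w ∈ C) :
    ∃ g, Tiling T g ∧ ∀ a y, (g (a, y)).west ∈ C → ∀ x, (g (x, y)).west ∈ C := by
  set U := Ultrafilter.of (atTop : Filter ℤ)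
  have hU : ∀ z : ℤ, ∀ᶠ j in U, z ≤ j :=
    fun z => (eventually_ge_atTop z).filter_mono (Ultrafilter.of_le _)
  obtain ⟨g, hg, hlim⟩ := hf.exists_ultrafilter_limit hT U fun j => (j, 0)
  replace hlim : ∀ x y, ∀ᶠ j in U, f (x + j, y) = g (x, y) :=
    fun x y => by simpa using hlim (x, y)
  refine ⟨g, hg, fun a y ha x => ?_⟩
  have hA : ∀ᶠ j in U, (f (a + j, y)).west ∈ C := (hlim a y).mono fun j hj => hj ▸ ha
  obtain ⟨j₀, hj₀⟩ := hA.exists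
  obtain ⟨j, hj, hjx⟩ := ((hlim x y).and (hU (a + j₀ - x))).exists
  obtain ⟨j₁, hj₁, hj₁x⟩ := (hA.and (hU (x + j - a))).exists
  have hmem := hf.west_mem_of_le_of_le hconvex (x := x + j) (by omega) (by omega) hj₀ hj₁
  rwa [hj] at hmem

variable {next : H → H}

lemma exists_shift_eq_of_west_mem (hf : Tiling T f)
    (huniq : ∀ c ∈ C, ∃! t : WangTile H V, t ∈ T ∧ t.west = c ∧ t.east ∈ C)
    (hedge : ∀ t ∈ T, t.west ∈ C → t.east ∈ C → t.east = next t.west) (hinj : InjOn next C)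
    (hcycle : ∀ c ∈ C, ∀ c' ∈ C, ∃ m : ℕ, next^[m] c = c') {y₁ y₂ : ℤ}
    (h₁ : ∀ x, (f (x, y₁)).west ∈ C) (h₂ : ∀ x, (f (x, y₂)).west ∈ C) :
    ∃ s, ∀ x, f (x + s, y₂) = f (x, y₁) := by
  have hstep : ∀ y, (∀ x, (f (x, y)).west ∈ C) →
      ∀ x, (f (x + 1, y)).west = next (f (x, y)).west := fun y hy x =>
    hf.east_eq x y ▸ hedge _ (hf.mem _) (hy x) (hf.east_eq x y ▸ hy (x + 1))
  obtain ⟨m, hm⟩ := hcycle _ (h₂ 0) _ (h₁ 0)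
  have hcolor : (fun x => (f (x + m, y₂)).west) = fun x => (f (x, y₁)).west := by
    refine Int.eq_of_forall_succ_of_injOn hinj (fun x => ?_) (hstep _ h₁) (fun x => h₂ _) h₁ ?_
    · rw [add_right_comm]; exact hstep _ h₂ _
    · simpa using
        (Int.iterate_of_forall_succ (a := fun x => (f (x, y₂)).west) (hstep _ h₂) 0 m).trans hm
  refine ⟨m, fun x => ?_⟩
  obtain ⟨t, -, ht⟩ := huniq _ (h₁ x)
  exact (ht _ ⟨hf.mem _, congrFun hcolor x, hf.east_eq _ _ ▸ h₂ _⟩).trans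
    (ht _ ⟨hf.mem _, rfl, hf.east_eq _ _ ▸ h₁ _⟩).symm

end Tiling

/-- if the underlying directed multigraph of `T` contains a strongly
connected component `C` whose set of edges forms a single directed cycle (every vertex
of `C` has exactly one outgoing edge inside `C`, these edges stay in `C` and follow a
map `next` whose iterates sweep out all of `C`), then `T` is not minimally aperiodic. -/
theorem not_minimallyAperiodic_of_cycle_scc {H V : Type*} (T : Set (WangTile H V))
    (hT : T.Finite) (C : Set H) (hne : C.Nonempty)
    -- `C` is strongly connected:
    (hconn : ∀ u ∈ C, ∀ v ∈ C, Relation.ReflTransGen (HStep T) u v)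
    -- `C` is maximal with this property (it is a strongly connected component):
    (hmax : ∀ u ∈ C, ∀ w : H, Relation.ReflTransGen (HStep T) u w →
      Relation.ReflTransGen (HStep T) w u → w ∈ C)
    (next : H → H) (hnextC : ∀ c ∈ C, next c ∈ C)
    -- every vertex of `C` has exactly one outgoing edge inside the component:
    (huniq : ∀ c ∈ C, ∃! t : WangTile H V, t ∈ T ∧ t.west = c ∧ t.east ∈ C)
    -- the edges inside the component follow `next`:
    (hedge : ∀ t ∈ T, t.west ∈ C → t.east ∈ C → t.east = next t.west)
    -- these edges form one cycle through all the vertices of the component: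
    (hcycle : ∀ c ∈ C, ∀ c' ∈ C, ∃ m : ℕ, next^[m] c = c') :
    ¬ MinimallyAperiodic T := by
  rintro ⟨⟨⟨f, hf⟩, hnoper⟩, hmin⟩
  obtain ⟨c, hc⟩ := hne
  obtain ⟨t, ⟨htT, htc, -⟩, -⟩ := huniq c hc
  have hS : ¬ TilesPlane (T \ {t | t.west ∈ C}) :=
    hmin _ (sdiff_ssubset_left_iff.2 ⟨t, htT, show t.west ∈ C from htc ▸ hc⟩)
  have hconvex : ∀ u ∈ C, ∀ w, ∀ v ∈ C, Relation.ReflTransGen (HStep T) u w →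
      Relation.ReflTransGen (HStep T) w v → w ∈ C :=
    fun u hu w v hv huw hwv => hmax u hu w huw (hwv.trans (hconn v hv u hu))
  have hCfin : C.Finite := (hT.image WangTile.west).subset fun c hc =>
    let ⟨t, ⟨htT, htc, _⟩, _⟩ := huniq c hc; ⟨t, htT, htc⟩
  obtain ⟨g, hg, hrow⟩ := hf.exists_limit_west_mem_row hT hconvex
  obtain ⟨p₁, -, hp₁⟩ := hg.exists_mem_above hT hS 0
  obtain ⟨p₂, hlt, hp₂⟩ := hg.exists_mem_above hT hS p₁.2
  obtain ⟨s, hs⟩ := hg.exists_shift_eq_of_west_mem huniq hedge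
    (hCfin.injOn_of_exists_iterate_eq hnextC hcycle) hcycle (hrow _ _ hp₁) (hrow _ _ hp₂)
  obtain ⟨F, hF, hper⟩ := (hg.comp_add_const (0, p₁.2)).exists_periodicTiling
    (sub_pos.2 hlt) fun x => by simpa using hs x
  exact hnoper F hF hper
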